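/- For integers N ≥ 0, define polynomials p_N(z) = Σ_{i=0}^{⌊(N+1)/2⌋} C(N+1, 2i) z^i and q_N(z) = Σ_{i=0}^{⌊N/2⌋} C(N+1, 2i+1) z^i. Then as an identity of rational functions in variables z₁, z₂: 1/(1 - z₂/z₁²) = Σ_{r=0}^{N} (Σ_s d_{r,s} (1-z₂)^s) (1-z₁)^r - ((1-z₁)/(1-z₂))^{N+1} · (z₁ q_N(z₂) + p_N(z₂))/(1 - z₁²/z₂), where d_{r,s} are the coefficients of the Laurent expansion of (1-2x₁+x₁²)/(x₂-2x₁+x₁²) (with x_i = 1-z_i) in |x₁| < |x₂|, and the inner sum over s is finite (s ranges from -r-1 to -⌊r/2⌋). -/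

import Mathlib

open Finset

/-- Binomial coefficient with integer arguments, zero outside `0 ≤ k ≤ n`. -/
noncomputable def Cb (n k : ℤ) : ℚ :=
  if 0 ≤ k ∧ k ≤ n then (n.toNat.choose k.toNat : ℚ) else 0

/-- Coefficient of `x₁^r x₂^s` in the Laurent expansion of `1/(x₂ - 2x₁ + x₁²)`
valid for `|x₁| < |x₂|`:  `e_{r,-k} = (-1)^{r-k+1} 2^{2k-2-r} C(k-1, 2k-2-r)`. -/
noncomputable def eCoef (r s : ℤ) : ℚ :=
  (-1 : ℚ) ^ (r + s + 1) * (2 : ℚ) ^ (-2 * s - 2 - r) * Cb (-s - 1) (-2 * s - 2 - r)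

/-- Coefficient of `x₁^r x₂^s` in the Laurent expansion of
`(1 - 2x₁ + x₁²)/(x₂ - 2x₁ + x₁²)` valid for `|x₁| < |x₂|`. -/
noncomputable def dCoef (r s : ℤ) : ℚ :=
  eCoef r s - 2 * eCoef (r - 1) s + eCoef (r - 2) s

/-- `p_N(z) = Σ_{i=0}^{⌊(N+1)/2⌋} C(N+1, 2i) z^i`. -/
noncomputable def pPoly (N : ℕ) (z : ℂ) : ℂ :=
  ∑ i ∈ Finset.range ((N + 1) / 2 + 1), ((N + 1).choose (2 * i) : ℂ) * z ^ i

/-- `q_N(z) = Σ_{i=0}^{⌊N/2⌋} C(N+1, 2i+1) z^i`. -/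
noncomputable def qPoly (N : ℕ) (z : ℂ) : ℂ :=
  ∑ i ∈ Finset.range (N / 2 + 1), ((N + 1).choose (2 * i + 1) : ℂ) * z ^ i

/-!
Write `x₁ = 1 - z₁`, `x₂ = 1 - z₂`, so that `z₁² - z₂ = x₂ - 2x₁ + x₁²`. That the
product of `x₂ - 2x₁ + x₁²` with `Σ eCoef r s x₁^r x₂^s` is `1` amounts, coefficientwise,
to Pascal's rule (`eCoef_sub_one`). Hence the rows `D_r = Σ_s dCoef r s x₂^s` satisfy
`x₂ D_{r+3} = 2 D_{r+2} - D_{r+1}`, the recurrence also satisfied by `z₂ q_r(z₂) / x₂^(r+1)`,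
so `D_r = z₂ q_r(z₂) / x₂^(r+1)` for `r ≥ 1`. Since `p_{N+1} = p_N + z q_N` and
`q_{N+1} = q_N + p_N`, the remainder terms telescope: `R_{N+1} - R_N = D_{N+1} x₁^(N+1)`.
-/

theorem Cb_natCast (n k : ℕ) : Cb n k = n.choose k := by
  by_cases h : k ≤ n
  · simp [Cb, h]
  · simp [Cb, h, Nat.choose_eq_zero_of_lt (not_le.1 h)]

theorem Cb_eq_zero {n k : ℤ} (h : k < 0 ∨ n < k) : Cb n k = 0 := by
  rw [Cb, if_neg (by omega)]

theorem Cb_pascal (n k : ℤ) :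
    Cb n k = Cb (n - 1) (k - 1) + Cb (n - 1) k + if n = 0 ∧ k = 0 then 1 else 0 := by
  by_cases hkn : 0 ≤ k ∧ k ≤ n
  swap
  · rw [Cb_eq_zero (by omega), Cb_eq_zero (by omega), Cb_eq_zero (by omega), if_neg (by omega)]
    norm_num
  obtain ⟨hk, hkn⟩ := hkn
  lift k to ℕ using hk
  lift n to ℕ using (by omega)
  rcases n with _ | n <;> rcases k with _ | k
  · simp [Cb]
  · omega
  · simp [Cb, (by positivity : (0 : ℤ) ≤ n + 1), (by positivity : (n : ℤ) + 1 ≠ 0)]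
  · rw [if_neg (by omega), Nat.cast_succ, Nat.cast_succ, add_sub_cancel_right,
      add_sub_cancel_right, ← Nat.cast_succ, ← Nat.cast_succ]
    simp only [Cb_natCast, Nat.choose_succ_succ]
    push_cast
    ring

theorem eCoef_sub_one (r s : ℤ) :
    eCoef r (s - 1) = 2 * eCoef (r - 1) s - eCoef (r - 2) s + if r = 0 ∧ s = 0 then 1 else 0 := by
  by_cases hrs : r = 0 ∧ s = 0
  · obtain ⟨rfl, rfl⟩ := hrs
    norm_num [eCoef, Cb]
  unfold eCoef
  rw [if_neg hrs, show -(s - 1) - 1 = -s by ring, show -2 * (s - 1) - 2 - r = -2 * s - r by ring,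
    Cb_pascal (-s) (-2 * s - r), if_neg (by omega),
    show r + (s - 1) + 1 = (r - 2 + s + 1) + 1 by ring,
    show r - 1 + s + 1 = (r - 2 + s + 1) + 1 by ring,
    show -2 * s - 2 - (r - 1) = -2 * s - r - 1 by ring,
    show -2 * s - 2 - (r - 2) = -2 * s - r by ring,
    zpow_add_one₀ (by norm_num), zpow_sub_one₀ (by norm_num)]
  ring

theorem eCoef_eq_zero {r s : ℤ} (h : -2 * s - 2 - r < 0 ∨ -s - 1 < -2 * s - 2 - r) :
    eCoef r s = 0 := by
  rw [eCoef, Cb_eq_zero h, mul_zero]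

theorem dCoef_eq_zero {r s : ℤ} (h : s < -r - 1 ∨ -r < 2 * s) : dCoef r s = 0 := by
  simp [dCoef, eCoef_eq_zero (by omega : -2 * s - 2 - r < 0 ∨ _),
    eCoef_eq_zero (by omega : -2 * s - 2 - (r - 1) < 0 ∨ _),
    eCoef_eq_zero (by omega : -2 * s - 2 - (r - 2) < 0 ∨ _)]

theorem dCoef_sub_one {r : ℤ} (hr : 3 ≤ r) (s : ℤ) :
    dCoef r (s - 1) = 2 * dCoef (r - 1) s - dCoef (r - 2) s := by
  simp only [dCoef, eCoef_sub_one]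
  rw [if_neg (by omega), if_neg (by omega), if_neg (by omega)]
  ring_nf

noncomputable def dRow (r : ℕ) (z : ℂ) : ℂ :=
  ∑ s ∈ Icc (-(r : ℤ) - 1) (-((r : ℤ) / 2)), (dCoef r s : ℂ) * (1 - z) ^ s

theorem sum_Icc_dCoef_eq_dRow (r : ℕ) {a b : ℤ} (ha : a ≤ -r - 1)
    (hb : -((r : ℤ) / 2) ≤ b) (z : ℂ) :
    ∑ s ∈ Icc a b, (dCoef r s : ℂ) * (1 - z) ^ s = dRow r z := by
  refine (sum_subset (Icc_subset_Icc ha hb) fun s hs hs' => ?_).symm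
  simp only [mem_Icc] at hs hs'
  simp [dCoef_eq_zero (by omega : s < -r - 1 ∨ -r < 2 * s)]

theorem one_sub_mul_dRow_add_three {z : ℂ} (hz : 1 - z ≠ 0) (m : ℕ) :
    (1 - z) * dRow (m + 3) z = 2 * dRow (m + 2) z - dRow (m + 1) z := by
  calc (1 - z) * dRow (m + 3) z
      = ∑ s ∈ Icc (-((m + 3 : ℕ) : ℤ) - 1) (-(((m + 3 : ℕ) : ℤ) / 2)),
          (dCoef (m + 3 : ℕ) s : ℂ) * (1 - z) ^ (s + 1) := by
        rw [dRow, mul_sum]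
        exact sum_congr rfl fun s _ => by rw [zpow_add_one₀ hz]; ring
    _ = ∑ t ∈ Icc (-((m + 3 : ℕ) : ℤ)) (-(((m + 1 : ℕ) : ℤ) / 2)),
          (dCoef (m + 3 : ℕ) (t - 1) : ℂ) * (1 - z) ^ t := by
        rw [show Icc (-((m + 3 : ℕ) : ℤ)) (-(((m + 1 : ℕ) : ℤ) / 2))
              = Icc (-((m + 3 : ℕ) : ℤ) - 1 + 1) (-(((m + 3 : ℕ) : ℤ) / 2) + 1) by
            congr 1; omega,
          ← map_add_right_Icc, sum_map]
        simp
    _ = ∑ t ∈ Icc (-((m + 3 : ℕ) : ℤ)) (-(((m + 1 : ℕ) : ℤ) / 2)),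
          (2 * ((dCoef (m + 2 : ℕ) t : ℂ) * (1 - z) ^ t)
            - (dCoef (m + 1 : ℕ) t : ℂ) * (1 - z) ^ t) := by
        refine sum_congr rfl fun t _ => ?_
        rw [dCoef_sub_one (by omega),
          show ((m + 3 : ℕ) : ℤ) - 1 = (m + 2 : ℕ) by push_cast; ring,
          show ((m + 3 : ℕ) : ℤ) - 2 = (m + 1 : ℕ) by push_cast; ring]
        push_cast
        ring
    _ = 2 * dRow (m + 2) z - dRow (m + 1) z := by
        rw [sum_sub_distrib, ← mul_sum, sum_Icc_dCoef_eq_dRow, sum_Icc_dCoef_eq_dRow] <;> omega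

theorem dRow_zero (z : ℂ) : dRow 0 z = (1 - z)⁻¹ := by
  rw [dRow, show Icc (-((0 : ℕ) : ℤ) - 1) (-(((0 : ℕ) : ℤ) / 2)) = {-1, 0} by decide]
  norm_num [dCoef, eCoef, Cb]

theorem pow_mul_dRow_one {z : ℂ} (hz : 1 - z ≠ 0) : (1 - z) ^ 2 * dRow 1 z = z * qPoly 1 z := by
  have hd₂ : dCoef 1 (-2) = 2 := by norm_num [dCoef, eCoef, Cb, Int.reduceToNat]
  have hd₁ : dCoef 1 (-1) = -2 := by norm_num [dCoef, eCoef, Cb, Int.reduceToNat]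
  have hd₀ : dCoef 1 0 = 0 := dCoef_eq_zero (by omega)
  rw [dRow, show Icc (-((1 : ℕ) : ℤ) - 1) (-(((1 : ℕ) : ℤ) / 2)) = {-2, -1, 0} by decide]
  norm_num [hd₂, hd₁, hd₀, qPoly]
  field_simp
  ring

theorem pow_mul_dRow_two {z : ℂ} (hz : 1 - z ≠ 0) : (1 - z) ^ 3 * dRow 2 z = z * qPoly 2 z := by
  have hd₃ : dCoef 2 (-3) = 4 := by norm_num [dCoef, eCoef, Cb, Int.reduceToNat]
  have hd₂ : dCoef 2 (-2) = -5 := by norm_num [dCoef, eCoef, Cb, Int.reduceToNat]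
  have hd₁ : dCoef 2 (-1) = 1 := by norm_num [dCoef, eCoef, Cb, Int.reduceToNat]
  rw [dRow, show Icc (-((2 : ℕ) : ℤ) - 1) (-(((2 : ℕ) : ℤ) / 2)) = {-3, -2, -1} by decide]
  norm_num [hd₃, hd₂, hd₁, qPoly, sum_range_succ]
  field_simp
  ring

theorem pPoly_eq_sum_range {N K : ℕ} (hK : (N + 1) / 2 + 1 ≤ K) (z : ℂ) :
    pPoly N z = ∑ i ∈ range K, ((N + 1).choose (2 * i) : ℂ) * z ^ i := by
  refine sum_subset (range_subset_range.2 hK) fun i _ hi => ?_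
  rw [Nat.choose_eq_zero_of_lt (by simp at hi; omega), Nat.cast_zero, zero_mul]

theorem qPoly_eq_sum_range {N K : ℕ} (hK : N / 2 + 1 ≤ K) (z : ℂ) :
    qPoly N z = ∑ i ∈ range K, ((N + 1).choose (2 * i + 1) : ℂ) * z ^ i := by
  refine sum_subset (range_subset_range.2 hK) fun i _ hi => ?_
  rw [Nat.choose_eq_zero_of_lt (by simp at hi; omega), Nat.cast_zero, zero_mul]

theorem pPoly_succ (N : ℕ) (z : ℂ) : pPoly (N + 1) z = pPoly N z + z * qPoly N z := by
  rw [pPoly_eq_sum_range (K := N / 2 + 2) (by omega),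
    pPoly_eq_sum_range (K := N / 2 + 2) (by omega), qPoly, sum_range_succ',
    sum_range_succ' _ (N / 2 + 1), mul_sum, Nat.choose_zero_right, Nat.choose_zero_right,
    add_right_comm _ (_ * z ^ 0), ← sum_add_distrib]
  congr 1
  refine sum_congr rfl fun i _ => ?_
  rw [show 2 * (i + 1) = 2 * i + 1 + 1 by ring, Nat.choose_succ_succ]
  push_cast
  ring

theorem qPoly_succ (N : ℕ) (z : ℂ) : qPoly (N + 1) z = qPoly N z + pPoly N z := by
  rw [qPoly_eq_sum_range (K := N / 2 + 2) (by omega),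
    qPoly_eq_sum_range (K := N / 2 + 2) (by omega),
    pPoly_eq_sum_range (K := N / 2 + 2) (by omega), ← sum_add_distrib]
  refine sum_congr rfl fun i _ => ?_
  rw [Nat.choose_succ_succ]
  push_cast
  ring

theorem qPoly_add_two (n : ℕ) (z : ℂ) :
    qPoly (n + 2) z = 2 * qPoly (n + 1) z - (1 - z) * qPoly n z := by
  linear_combination qPoly_succ (n + 1) z + pPoly_succ n z - qPoly_succ n z

theorem pow_mul_dRow_succ {z : ℂ} (hz : 1 - z ≠ 0) (n : ℕ) :
    (1 - z) ^ (n + 2) * dRow (n + 1) z = z * qPoly (n + 1) z := by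
  induction n using Nat.twoStepInduction with
  | zero => exact pow_mul_dRow_one hz
  | one => exact pow_mul_dRow_two hz
  | more n ih₁ ih₂ =>
    calc (1 - z) ^ (n + 4) * dRow (n + 3) z
        = (1 - z) ^ (n + 3) * ((1 - z) * dRow (n + 3) z) := by ring
      _ = 2 * ((1 - z) ^ (n + 3) * dRow (n + 2) z)
            - (1 - z) * ((1 - z) ^ (n + 2) * dRow (n + 1) z) := by
        rw [one_sub_mul_dRow_add_three hz]; ring
      _ = 2 * (z * qPoly (n + 2) z) - (1 - z) * (z * qPoly (n + 1) z) := by rw [ih₁, ih₂]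
      _ = z * qPoly (n + 3) z := by rw [qPoly_add_two (n + 1)]; ring

theorem dRow_succ {z : ℂ} (hz : 1 - z ≠ 0) (n : ℕ) :
    dRow (n + 1) z = z * qPoly (n + 1) z / (1 - z) ^ (n + 2) := by
  rw [eq_div_iff (pow_ne_zero _ hz), mul_comm, pow_mul_dRow_succ hz]

noncomputable def remainder (N : ℕ) (z₁ z₂ : ℂ) : ℂ :=
  ((1 - z₁) / (1 - z₂)) ^ (N + 1) * (z₁ * qPoly N z₂ + pPoly N z₂) / (1 - z₁ ^ 2 / z₂)

theorem remainder_succ_sub_remainder {z₁ z₂ : ℂ} (hz₂ : z₂ ≠ 0) (hx₂ : 1 - z₂ ≠ 0)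
    (h : z₁ ^ 2 ≠ z₂) (N : ℕ) :
    remainder (N + 1) z₁ z₂ - remainder N z₁ z₂
      = z₂ * qPoly (N + 1) z₂ / (1 - z₂) ^ (N + 2) * (1 - z₁) ^ (N + 1) := by
  have hD : z₂ - z₁ ^ 2 ≠ 0 := sub_ne_zero.2 h.symm
  rw [remainder, remainder, qPoly_succ, pPoly_succ, one_sub_div hz₂, div_pow, div_pow]
  field_simp
  ring

theorem stmt5_general (N : ℕ) (z₁ z₂ : ℂ) (h1 : z₁ ≠ 0) (h2 : z₂ ≠ 0)
    (h4 : z₂ ≠ 1) (h5 : z₁ ^ 2 ≠ z₂) :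
    (1 - z₂ / z₁ ^ 2)⁻¹ =
      ∑ r ∈ Finset.range (N + 1),
        (∑ s ∈ Finset.Icc (-(r : ℤ) - 1) (-((r : ℤ) / 2)), (dCoef r s : ℂ) * (1 - z₂) ^ s)
          * (1 - z₁) ^ r
      - ((1 - z₁) / (1 - z₂)) ^ (N + 1) * (z₁ * qPoly N z₂ + pPoly N z₂)
          / (1 - z₁ ^ 2 / z₂) := by
  have hx₂ : 1 - z₂ ≠ 0 := sub_ne_zero.2 h4.symm
  change _ = ∑ r ∈ range (N + 1), dRow r z₂ * (1 - z₁) ^ r - remainder N z₁ z₂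
  induction N with
  | zero =>
    have hD : z₁ ^ 2 - z₂ ≠ 0 := sub_ne_zero.2 h5
    rw [sum_range_one, dRow_zero, remainder, one_sub_div h2, one_sub_div (pow_ne_zero 2 h1)]
    simp only [qPoly, pPoly, zero_add, pow_one, Nat.zero_div, range_one, sum_singleton, mul_zero,
      pow_zero, mul_one, Nat.choose_self, Nat.cast_one, Nat.reduceDiv, Nat.choose_succ_self_right]
    field_simp
    ring
  | succ N ih =>
    rw [sum_range_succ, dRow_succ hx₂]
    linear_combination ih + remainder_succ_sub_remainder h2 hx₂ h5 N

/-- Truncation of the expansion of `1/(1-z₂/z₁²)` in powers of `(1-z₁)`, `(1-z₂)`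
with explicit remainder term. -/
theorem stmt5 (N : ℕ) (z₁ z₂ : ℂ) (h1 : z₁ ≠ 0) (h2 : z₂ ≠ 0) (h3 : z₁ ≠ 1)
    (h4 : z₂ ≠ 1) (h5 : z₁ ^ 2 ≠ z₂) :
    (1 - z₂ / z₁ ^ 2)⁻¹ =
      ∑ r ∈ Finset.range (N + 1),
        (∑ s ∈ Finset.Icc (-(r : ℤ) - 1) (-((r : ℤ) / 2)), (dCoef r s : ℂ) * (1 - z₂) ^ s)
          * (1 - z₁) ^ r
      - ((1 - z₁) / (1 - z₂)) ^ (N + 1) * (z₁ * qPoly N z₂ + pPoly N z₂)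
          / (1 - z₁ ^ 2 / z₂) :=
  stmt5_general N z₁ z₂ h1 h2 h4 h5
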